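/- arXiv:2408.12094 — 2 statements merged into one kernel-verified Lean document; each statement's English description precedes it below -/
import Mathlib

section
/- Let f : ℝ → X be bounded and continuous. Then for each t ∈ ℝ the Bochner integral u(t) := ∫_ℝ G(t,s) f(s) ds converges, u is bounded and continuous on ℝ, and sup_{t∈ℝ} ‖u(t)‖ ≤ (2(1+H)N/β) · sup_{s∈ℝ} ‖f(s)‖. -/
open MeasureTheory Real Filter Bornology

/-- An evolution family on a Banach space `X` together with an exponential dichotomy:
projections `P t`, the inverses `V s t` of the restrictions of `U t s` to the kernels
of the projections (i.e. `V s t = U_Q(s,t)` for `s ≤ t`), dichotomy constants `N, β`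
and a bound `H` on the norms of the projections. -/
structure EvolutionDichotomy (X : Type*) [NormedAddCommGroup X] [NormedSpace ℝ X] where
  U : ℝ → ℝ → X →L[ℝ] X
  P : ℝ → X →L[ℝ] X
  V : ℝ → ℝ → X →L[ℝ] X
  N : ℝ
  β : ℝ
  H : ℝ
  N_pos : 0 < N
  β_pos : 0 < β
  U_id : ∀ s, U s s = ContinuousLinearMap.id ℝ X
  U_comp : ∀ ⦃s r t : ℝ⦄, s ≤ r → r ≤ t → ∀ x, U t r (U r s x) = U t s x
  U_cont : ∀ x : X, ContinuousOn (fun p : ℝ × ℝ => U p.1 p.2 x) {p : ℝ × ℝ | p.2 ≤ p.1}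
  P_proj : ∀ t x, P t (P t x) = P t x
  P_cont : ∀ x : X, Continuous fun t => P t x
  P_bound : ∀ t, ‖P t‖ ≤ H
  comm : ∀ ⦃s t : ℝ⦄, s ≤ t → ∀ x, P t (U t s x) = U t s (P s x)
  V_mapsTo : ∀ ⦃s t : ℝ⦄, s ≤ t → ∀ x, P s (V s t (x - P t x)) = 0
  V_left : ∀ ⦃s t : ℝ⦄, s ≤ t → ∀ x, V s t (U t s (x - P s x)) = x - P s x
  V_right : ∀ ⦃s t : ℝ⦄, s ≤ t → ∀ x, U t s (V s t (x - P t x)) = x - P t x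
  P_decay : ∀ ⦃s t : ℝ⦄, s ≤ t → ∀ x, ‖U t s (P s x)‖ ≤ N * Real.exp (-β * (t - s)) * ‖x‖
  Q_decay : ∀ ⦃s t : ℝ⦄, s ≤ t → ∀ x, ‖V s t (x - P t x)‖ ≤ N * Real.exp (-β * (t - s)) * ‖x‖

namespace EvolutionDichotomy

variable {X : Type*} [NormedAddCommGroup X] [NormedSpace ℝ X]

/-- The complementary projection `Q t = Id - P t`. -/
noncomputable def Q (E : EvolutionDichotomy X) (t : ℝ) : X →L[ℝ] X :=
  ContinuousLinearMap.id ℝ X - E.P t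

/-- The Green function of the dichotomy: `G t s = P t ∘ U t s` for `t > s` and
`G t s = -(U_Q(t,s) ∘ Q s)` for `t ≤ s`. -/
noncomputable def G (E : EvolutionDichotomy X) (t s : ℝ) : X →L[ℝ] X :=
  if s < t then (E.P t).comp (E.U t s) else -((E.V t s).comp (E.Q s))

/-- The Green function is exponentially almost periodic. -/
def ExpAP (E : EvolutionDichotomy X) : Prop :=
  ∀ η > (0:ℝ), ∀ ε > (0:ℝ), ∃ γ > (0:ℝ), ∃ l > (0:ℝ), ∀ a : ℝ,
    ∃ T ∈ Set.Icc a (a + l), ∀ t s : ℝ, η ≤ |t - s| →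
      ‖E.G (t + T) (s + T) - E.G t s‖ ≤ ε * Real.exp (-γ * |t - s|)

end EvolutionDichotomy

/-- A bounded continuous function `f : ℝ → X` is (Bohr) almost periodic if for every `ε > 0`
there is `l > 0` such that every interval of length `l` contains an `ε`-almost period. -/
def AlmostPeriodic {X : Type*} [NormedAddCommGroup X] (f : ℝ → X) : Prop :=
  Continuous f ∧ Bornology.IsBounded (Set.range f) ∧
  ∀ ε > (0:ℝ), ∃ l > (0:ℝ), ∀ a : ℝ, ∃ T ∈ Set.Icc a (a + l),
    ∀ t : ℝ, ‖f (t + T) - f t‖ < ε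

/-- A function on `[0,∞)` is asymptotically almost periodic if it is the sum of an almost
periodic function and a continuous function vanishing at infinity. -/
def AsympAlmostPeriodic {X : Type*} [NormedAddCommGroup X] (g : ℝ → X) : Prop :=
  ∃ h φ : ℝ → X, AlmostPeriodic h ∧ ContinuousOn φ (Set.Ici 0) ∧
    Filter.Tendsto (fun t => ‖φ t‖) Filter.atTop (nhds 0) ∧
    ∀ t : ℝ, 0 ≤ t → g t = h t + φ t

/-- `PAP0`: bounded continuous functions with vanishing mean value. -/
def PAP0 {X : Type*} [NormedAddCommGroup X] (φ : ℝ → X) : Prop :=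
  Continuous φ ∧ Bornology.IsBounded (Set.range φ) ∧
  Filter.Tendsto (fun r : ℝ => (1 / (2 * r)) * ∫ t in (-r)..r, ‖φ t‖)
    Filter.atTop (nhds 0)

/-- A bounded continuous function is pseudo almost periodic if it is the sum of an almost
periodic function and a `PAP0` function. -/
def PseudoAP {X : Type*} [NormedAddCommGroup X] (f : ℝ → X) : Prop :=
  ∃ g φ : ℝ → X, AlmostPeriodic g ∧ PAP0 φ ∧ ∀ t : ℝ, f t = g t + φ t

/-!
Both halves of the Green function are dominated by the dichotomy estimates,
`‖G(t,s)‖ ≤ N e^{-β|t-s|}`, and `∫ e^{-β|t-s|} ds = 2/β`; this gives integrability and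
the bound.
Continuity of `u` is dominated convergence, since `t ↦ G(t,s)x` is continuous off the diagonal.
Measurability of `s ↦ G(t,s) f(s)` comes from continuity on `s < t` and on `s ≥ t`: each half is
a family of operators of norm at most `N` that is strongly continuous in `s`, and such a family
applied to a continuous function is continuous.
-/

open Set Topology

section OperatorFamily

variable {α β 𝕜 E F : Type*} [TopologicalSpace α] [NontriviallyNormedField 𝕜]
  [NormedAddCommGroup E] [NormedSpace 𝕜 E] [NormedAddCommGroup F] [NormedSpace 𝕜 F]

theorem tendsto_clm_apply_zero_of_norm_le {l : Filter β} {T : β → E →L[𝕜] F} {a : β → E}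
    {M : ℝ} (hT : ∀ᶠ s in l, ‖T s‖ ≤ M) (ha : Tendsto a l (𝓝 0)) :
    Tendsto (fun s => T s (a s)) l (𝓝 0) := by
  refine squeeze_zero_norm' (hT.mono fun s hs => ((T s).le_opNorm (a s)).trans
    (mul_le_mul_of_nonneg_right hs (norm_nonneg _))) ?_
  simpa using ha.norm.const_mul M

theorem continuousWithinAt_of_sub_eq_clm_apply {g : α → F} {T : α → E →L[𝕜] F}
    {a : α → E} {S : Set α} {s₀ : α} {M : ℝ} (hT : ∀ s ∈ S, ‖T s‖ ≤ M)
    (hg : ∀ s ∈ S, g s - g s₀ = T s (a s)) (ha : ContinuousWithinAt a S s₀)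
    (ha₀ : a s₀ = 0) :
    ContinuousWithinAt g S s₀ := by
  have h := tendsto_clm_apply_zero_of_norm_le (eventually_nhdsWithin_of_forall hT)
    (ha₀ ▸ ha.tendsto)
  exact tendsto_sub_nhds_zero_iff.1
    (h.congr' (eventuallyEq_nhdsWithin_of_eqOn fun s hs => (hg s hs).symm))

theorem ContinuousOn.clm_apply_of_norm_le {T : α → E →L[𝕜] F} {y : α → E} {S : Set α}
    {M : ℝ} (hT : ∀ s ∈ S, ‖T s‖ ≤ M) (hTc : ∀ x, ContinuousOn (fun s => T s x) S)
    (hy : ContinuousOn y S) : ContinuousOn (fun s => T s (y s)) S := by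
  intro s₀ hs₀
  have hdiff := tendsto_clm_apply_zero_of_norm_le (eventually_nhdsWithin_of_forall hT)
    (tendsto_sub_nhds_zero_iff.2 (hy s₀ hs₀))
  simpa [ContinuousWithinAt] using hdiff.add (hTc (y s₀) s₀ hs₀)

end OperatorFamily

section ExpKernel

theorem integral_exp_neg_mul_abs_sub {b : ℝ} (hb : 0 < b) (t : ℝ) :
    ∫ s, exp (-b * |t - s|) = 2 / b := by
  rw [integral_sub_left_eq_self (fun s => exp (-b * |s|)) volume t,
    integral_comp_abs (f := fun s => exp (-b * s)), integral_exp_mul_Ioi (neg_lt_zero.2 hb)]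
  field_simp
  simp

theorem integrable_exp_neg_mul_abs_sub {b : ℝ} (hb : 0 < b) (t : ℝ) :
    Integrable fun s => exp (-b * |t - s|) :=
  .of_integral_ne_zero (by rw [integral_exp_neg_mul_abs_sub hb]; positivity)

theorem exp_neg_mul_abs_sub_le {b : ℝ} (hb : 0 ≤ b) (t t₀ s : ℝ) :
    exp (-b * |t - s|) ≤ exp (b * |t - t₀|) * exp (-b * |t₀ - s|) := by
  rw [← exp_add, exp_le_exp]
  nlinarith [abs_sub_le t₀ t s, abs_sub_comm t₀ t]

variable {X : Type*} [NormedAddCommGroup X]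

theorem integrable_of_norm_le_exp {K : ℝ → X} {C b t : ℝ} (hb : 0 < b)
    (hmeas : AEStronglyMeasurable K) (hK : ∀ s, ‖K s‖ ≤ C * exp (-b * |t - s|)) :
    Integrable K :=
  ((integrable_exp_neg_mul_abs_sub hb t).const_mul C).mono' hmeas (.of_forall hK)

theorem norm_integral_le_of_norm_le_exp [NormedSpace ℝ X] {K : ℝ → X} {C b t : ℝ}
    (hb : 0 < b) (hK : ∀ s, ‖K s‖ ≤ C * exp (-b * |t - s|)) :
    ‖∫ s, K s‖ ≤ C * (2 / b) := by
  refine (norm_integral_le_of_norm_le ((integrable_exp_neg_mul_abs_sub hb t).const_mul C)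
    (.of_forall hK)).trans_eq ?_
  rw [integral_const_mul, integral_exp_neg_mul_abs_sub hb]

theorem continuous_integral_of_norm_le_exp [NormedSpace ℝ X] {K : ℝ → ℝ → X} {C b : ℝ}
    (hb : 0 < b) (hmeas : ∀ t, AEStronglyMeasurable (K t))
    (hK : ∀ t s, ‖K t s‖ ≤ C * exp (-b * |t - s|))
    (hcont : ∀ s t₀, s ≠ t₀ → ContinuousAt (fun t => K t s) t₀) :
    Continuous fun t => ∫ s, K t s := by
  refine continuous_iff_continuousAt.2 fun t₀ => continuousAt_of_dominated
    (bound := fun s => C * exp b * exp (-b * |t₀ - s|)) (.of_forall hmeas) ?_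
    (((integrable_exp_neg_mul_abs_sub hb t₀).const_mul (C * exp b)))
    ((Measure.ae_ne volume t₀).mono fun s hs => hcont s t₀ hs)
  have hC : 0 ≤ C := (norm_nonneg _).trans ((hK 0 0).trans (by simp))
  filter_upwards [Metric.ball_mem_nhds t₀ one_pos] with t ht
  refine .of_forall fun s => (hK t s).trans ?_
  have hclose : exp (b * |t - t₀|) ≤ exp b := by
    rw [exp_le_exp]
    nlinarith [(Real.dist_eq t t₀ ▸ Metric.mem_ball.1 ht : |t - t₀| < 1)]
  calc C * exp (-b * |t - s|) ≤ C * (exp b * exp (-b * |t₀ - s|)) :=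
        mul_le_mul_of_nonneg_left ((exp_neg_mul_abs_sub_le hb.le t t₀ s).trans
          (mul_le_mul_of_nonneg_right hclose (exp_pos _).le)) hC
    _ = C * exp b * exp (-b * |t₀ - s|) := by ring

end ExpKernel

namespace EvolutionDichotomy

variable {X : Type*} [NormedAddCommGroup X] [NormedSpace ℝ X] (E : EvolutionDichotomy X)
  {r s t : ℝ} {y : X}

theorem H_nonneg : 0 ≤ E.H := (norm_nonneg _).trans (E.P_bound 0)

theorem Q_apply (t : ℝ) (x : X) : E.Q t x = x - E.P t x := rfl

theorem P_Q (t : ℝ) (x : X) : E.P t (E.Q t x) = 0 := by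
  rw [Q_apply, map_sub, E.P_proj, sub_self]

theorem Q_Q (t : ℝ) (x : X) : E.Q t (E.Q t x) = E.Q t x := by
  rw [Q_apply (x := E.Q t x), P_Q, sub_zero]

theorem Q_eq_self_iff : E.Q t y = y ↔ E.P t y = 0 := by
  rw [Q_apply, sub_eq_self]

theorem continuous_Q_apply (x : X) : Continuous fun t => E.Q t x :=
  continuous_const.sub (E.P_cont x)

theorem Q_U_of_Q (h : s ≤ t) (hy : E.Q s y = y) : E.Q t (E.U t s y) = E.U t s y := by
  rw [Q_apply, E.comm h, ← map_sub, ← Q_apply, hy]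

theorem V_U_of_Q (h : s ≤ t) (hy : E.Q s y = y) : E.V s t (E.U t s y) = y := by
  have h' := E.V_left h y
  rwa [← Q_apply, hy] at h'

theorem U_V_of_Q (h : s ≤ t) (hy : E.Q t y = y) : E.U t s (E.V s t y) = y := by
  have h' := E.V_right h y
  rwa [← Q_apply, hy] at h'

theorem Q_V_of_Q (h : s ≤ t) (hy : E.Q t y = y) : E.Q s (E.V s t y) = E.V s t y := by
  have h' := E.V_mapsTo h y
  rwa [← Q_apply, hy, ← Q_eq_self_iff] at h'

theorem V_comp (h₁ : t ≤ r) (h₂ : r ≤ s) (hy : E.Q s y = y) :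
    E.V t r (E.V r s y) = E.V t s y := by
  have hr := E.Q_V_of_Q h₂ hy
  calc E.V t r (E.V r s y) = E.V t s (E.U s t (E.V t r (E.V r s y))) :=
        (E.V_U_of_Q (h₁.trans h₂) (E.Q_V_of_Q h₁ hr)).symm
    _ = E.V t s y := by rw [← E.U_comp h₁ h₂, E.U_V_of_Q h₁ hr, E.U_V_of_Q h₂ hy]

theorem U_V (h₁ : r ≤ t) (h₂ : t ≤ s) (hy : E.Q s y = y) :
    E.U t r (E.V r s y) = E.V t s y := by
  rw [← E.V_comp h₁ h₂ hy, E.U_V_of_Q h₁ (E.Q_V_of_Q h₂ hy)]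

theorem V_U (h₁ : t ≤ r) (h₂ : r ≤ s) (hy : E.Q r y = y) :
    E.V t s (E.U s r y) = E.V t r y := by
  rw [← E.V_comp h₁ h₂ (E.Q_U_of_Q h₂ hy), E.V_U_of_Q h₂ hy]

theorem N_mul_exp_le (h : s ≤ t) : E.N * exp (-E.β * (t - s)) ≤ E.N :=
  mul_le_of_le_one_right E.N_pos.le (exp_le_one_iff.2 (by nlinarith [E.β_pos]))

theorem norm_U_comp_P_le (h : s ≤ t) : ‖(E.U t s).comp (E.P s)‖ ≤ E.N :=
  ContinuousLinearMap.opNorm_le_bound _ E.N_pos.le fun x =>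
    (E.P_decay h x).trans (mul_le_mul_of_nonneg_right (E.N_mul_exp_le h) (norm_nonneg x))

theorem norm_V_comp_Q_le (h : s ≤ t) : ‖(E.V s t).comp (E.Q t)‖ ≤ E.N :=
  ContinuousLinearMap.opNorm_le_bound _ E.N_pos.le fun x =>
    (E.Q_decay h x).trans (mul_le_mul_of_nonneg_right (E.N_mul_exp_le h) (norm_nonneg x))

theorem continuousOn_U_fst (s : ℝ) (x : X) : ContinuousOn (fun r => E.U r s x) (Ici s) :=
  (E.U_cont x).comp (Continuous.prodMk_left s).continuousOn fun _ hr => hr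

theorem continuousOn_U_snd (t : ℝ) (x : X) : ContinuousOn (fun r => E.U t r x) (Iic t) :=
  (E.U_cont x).comp (Continuous.prodMk_right t).continuousOn fun _ hr => hr

theorem continuousOn_U_P_apply (t : ℝ) (x : X) :
    ContinuousOn (fun s => E.U t s (E.P s x)) (Iic t) := by
  intro s₀ (hs₀ : s₀ ≤ t)
  have hleft : ContinuousWithinAt (fun s => E.U t s (E.P s x)) (Iic s₀) s₀ := by
    refine (((E.U t s₀).comp (E.P s₀)).continuous.continuousAt.comp_continuousWithinAt
      (E.continuousOn_U_snd s₀ x s₀ self_mem_Iic)).congr (fun s (hs : s ≤ s₀) => ?_) ?_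
    · simp only [Function.comp_apply, ContinuousLinearMap.comp_apply, E.comm hs, E.U_comp hs hs₀]
    · simp [E.U_id]
  have hright : ContinuousWithinAt (fun s => E.U t s (E.P s x)) (Icc s₀ t) s₀ := by
    refine continuousWithinAt_of_sub_eq_clm_apply (fun s hs => E.norm_U_comp_P_le hs.2)
      (a := fun s => E.P s x - E.U s s₀ (E.P s₀ x)) (fun s hs => ?_)
      (((E.P_cont x).continuousWithinAt).sub
        ((E.continuousOn_U_fst s₀ _ s₀ self_mem_Ici).mono Icc_subset_Ici_self))
      (by simp [E.U_id])
    rw [ContinuousLinearMap.comp_apply, map_sub, E.P_proj, E.comm hs.1, E.P_proj, map_sub,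
      E.U_comp hs.1 hs.2]
  exact (hleft.union hright).mono fun s hs => (le_total s s₀).imp id fun h => ⟨h, hs⟩

theorem continuousOn_V_Q_apply (t : ℝ) (x : X) :
    ContinuousOn (fun s => E.V t s (E.Q s x)) (Ici t) := by
  intro s₀ (hs₀ : t ≤ s₀)
  have hleft : ContinuousWithinAt (fun s => E.V t s (E.Q s x)) (Icc t s₀) s₀ := by
    -- `V(t,s₀) Q(s₀) x = V(t,s) U(s,t) z`, which puts both values in the image of `V(t,s) Q(s)`
    set z := E.V t s₀ (E.Q s₀ x)
    have hz : E.Q t z = z := E.Q_V_of_Q hs₀ (E.Q_Q s₀ x)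
    refine continuousWithinAt_of_sub_eq_clm_apply (fun s hs => E.norm_V_comp_Q_le hs.1)
      (a := fun s => E.Q s x - E.U s t z) (fun s hs => ?_)
      (((E.continuous_Q_apply x).continuousWithinAt).sub
        ((E.continuousOn_U_fst t z s₀ hs₀).mono Icc_subset_Ici_self))
      (by simp [E.U_V_of_Q hs₀ (E.Q_Q s₀ x), z])
    simp [E.Q_Q, E.Q_U_of_Q hs.1 hz, E.V_U_of_Q hs.1 hz, z]
  have hright : ContinuousWithinAt (fun s => E.V t s (E.Q s x)) (Ici s₀) s₀ := by
    refine continuousWithinAt_of_sub_eq_clm_apply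
      (fun s (hs : s₀ ≤ s) => E.norm_V_comp_Q_le (hs₀.trans hs))
      (a := fun s => E.Q s x - E.U s s₀ (E.Q s₀ x)) (fun s (hs : s₀ ≤ s) => ?_)
      (((E.continuous_Q_apply x).continuousWithinAt).sub
        (E.continuousOn_U_fst s₀ _ s₀ self_mem_Ici)) (by simp [E.U_id])
    simp [E.Q_Q, E.Q_U_of_Q hs (E.Q_Q s₀ x), E.V_U hs₀ hs (E.Q_Q s₀ x)]
  exact (hleft.union hright).mono fun s hs => (le_total s s₀).imp (fun h => ⟨hs, h⟩) id

theorem G_of_lt (h : s < t) : E.G t s = (E.U t s).comp (E.P s) := by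
  ext x
  simp [G, h, E.comm h.le]

theorem G_of_le (h : t ≤ s) : E.G t s = -(E.V t s).comp (E.Q s) := by
  simp [G, h.not_gt]

theorem norm_G_apply_le (t s : ℝ) (x : X) :
    ‖E.G t s x‖ ≤ E.N * exp (-E.β * |t - s|) * ‖x‖ := by
  rcases lt_or_ge s t with h | h
  · rw [E.G_of_lt h, abs_of_pos (sub_pos.2 h)]
    exact E.P_decay h.le x
  · rw [E.G_of_le h, neg_apply, norm_neg, abs_of_nonpos (sub_nonpos.2 h),
      neg_sub]
    exact E.Q_decay h x

theorem aestronglyMeasurable_G_apply {f : ℝ → X} (hf : Continuous f) (t : ℝ) :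
    AEStronglyMeasurable fun s => E.G t s (f s) := by
  have hstable : ContinuousOn (fun s => E.G t s (f s)) (Iio t) :=
    (ContinuousOn.clm_apply_of_norm_le (fun s hs => E.norm_U_comp_P_le hs)
      (E.continuousOn_U_P_apply t) hf.continuousOn).mono Iio_subset_Iic_self
      |>.congr fun s (hs : s < t) => by simp [E.G_of_lt hs]
  have hunstable : ContinuousOn (fun s => E.G t s (f s)) (Ici t) :=
    (ContinuousOn.clm_apply_of_norm_le (fun s hs => E.norm_V_comp_Q_le hs)
      (E.continuousOn_V_Q_apply t) hf.continuousOn).neg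
      |>.congr fun s (hs : t ≤ s) => by simp [E.G_of_le hs]
  rw [← Measure.restrict_univ (μ := volume), ← Iio_union_Ici (a := t),
    aestronglyMeasurable_union_iff]
  exact ⟨hstable.aestronglyMeasurable measurableSet_Iio,
    hunstable.aestronglyMeasurable measurableSet_Ici⟩

theorem continuousAt_G_apply (h : s ≠ t) (x : X) : ContinuousAt (fun r => E.G r s x) t := by
  rcases h.lt_or_gt with h | h
  · refine ((E.continuousOn_U_fst s (E.P s x)).continuousAt
      (Ici_mem_nhds h)).congr_of_eventuallyEq ?_
    filter_upwards [Ioi_mem_nhds h] with r (hr : s < r)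
    simp [E.G_of_lt hr]
  · refine ((E.continuousOn_U_fst (t - 1) (E.V (t - 1) s (E.Q s x))).continuousAt
      (Ici_mem_nhds (sub_one_lt t))).neg.congr_of_eventuallyEq ?_
    filter_upwards [Ioo_mem_nhds (sub_one_lt t) h] with r hr
    simp [E.G_of_le hr.2.le, E.U_V hr.1.le hr.2.le (E.Q_Q s x)]

end EvolutionDichotomy

theorem green_convolution_bounded_continuous_general
    {X : Type*} [NormedAddCommGroup X] [NormedSpace ℝ X]
    (E : EvolutionDichotomy X) (f : ℝ → X)
    (hfc : Continuous f) (hfb : Bornology.IsBounded (Set.range f)) :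
    (∀ t : ℝ, MeasureTheory.Integrable (fun s : ℝ => E.G t s (f s))) ∧
    Continuous (fun t : ℝ => ∫ s : ℝ, E.G t s (f s)) ∧
    Bornology.IsBounded (Set.range (fun t : ℝ => ∫ s : ℝ, E.G t s (f s))) ∧
    ∀ t : ℝ, ‖∫ s : ℝ, E.G t s (f s)‖ ≤
      (2 * (1 + E.H) * E.N / E.β) * ⨆ s : ℝ, ‖f s‖ := by
  set M := ⨆ s : ℝ, ‖f s‖
  obtain ⟨C, hC⟩ := isBounded_iff_forall_norm_le.1 hfb
  have hfM : ∀ s, ‖f s‖ ≤ M :=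
    le_ciSup ⟨C, forall_mem_range.2 fun s => hC _ (mem_range_self s)⟩
  have hM : 0 ≤ M := (norm_nonneg _).trans (hfM 0)
  have hK : ∀ t s, ‖E.G t s (f s)‖ ≤ E.N * M * exp (-E.β * |t - s|) := fun t s =>
    (E.norm_G_apply_le t s (f s)).trans <| by
      rw [mul_right_comm]
      have := E.N_pos
      gcongr
      exact hfM s
  have hbound : ∀ t, ‖∫ s, E.G t s (f s)‖ ≤ 2 * (1 + E.H) * E.N / E.β * M := fun t =>
    calc ‖∫ s, E.G t s (f s)‖ ≤ E.N * M * (2 / E.β) :=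
          norm_integral_le_of_norm_le_exp E.β_pos (hK t)
      _ = 2 * E.N / E.β * M := by ring
      _ ≤ 2 * (1 + E.H) * E.N / E.β * M := by
          have := E.β_pos
          have := E.N_pos
          gcongr
          linarith [E.H_nonneg]
  have hmeas := E.aestronglyMeasurable_G_apply hfc
  refine ⟨fun t => integrable_of_norm_le_exp E.β_pos (hmeas t) (hK t),
    continuous_integral_of_norm_le_exp E.β_pos hmeas hK
      fun s t h => E.continuousAt_G_apply h (f s),
    isBounded_iff_forall_norm_le.2 ⟨_, forall_mem_range.2 hbound⟩, hbound⟩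

/-- for bounded continuous `f : ℝ → X`, the integral
`u(t) = ∫_ℝ G(t,s) f(s) ds` converges, `u` is bounded and continuous, and
`sup_t ‖u(t)‖ ≤ (2(1+H)N/β) · sup_s ‖f(s)‖`. -/
theorem green_convolution_bounded_continuous
    {X : Type*} [NormedAddCommGroup X] [NormedSpace ℝ X] [CompleteSpace X]
    (E : EvolutionDichotomy X) (f : ℝ → X)
    (hfc : Continuous f) (hfb : Bornology.IsBounded (Set.range f)) :
    (∀ t : ℝ, MeasureTheory.Integrable (fun s : ℝ => E.G t s (f s))) ∧
    Continuous (fun t : ℝ => ∫ s : ℝ, E.G t s (f s)) ∧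
    Bornology.IsBounded (Set.range (fun t : ℝ => ∫ s : ℝ, E.G t s (f s))) ∧
    ∀ t : ℝ, ‖∫ s : ℝ, E.G t s (f s)‖ ≤
      (2 * (1 + E.H) * E.N / E.β) * ⨆ s : ℝ, ‖f s‖ :=
  green_convolution_bounded_continuous_general E f hfc hfb
end

section
/- Let ρ, L > 0 and let h : ℝ × X → X satisfy ‖h(t,x₁) − h(t,x₂)‖ ≤ L ‖x₁ − x₂‖ for all t ∈ ℝ and all x₁, x₂ ∈ X with ‖x₁‖ ≤ ρ and ‖x₂‖ ≤ ρ, and assume t ↦ h(t, v(t)) is continuous for every bounded continuous v. Then for all bounded continuous v₁, v₂ : ℝ → X with sup_{t∈ℝ} ‖v₁(t)‖ ≤ ρ and sup_{t∈ℝ} ‖v₂(t)‖ ≤ ρ, the map Φ(v)(t) := ∫_ℝ G(t,s) h(s, v(s)) ds satisfies sup_{t∈ℝ} ‖Φ(v₁)(t) − Φ(v₂)(t)‖ ≤ (2L(1+H)N/β) · sup_{t∈ℝ} ‖v₁(t) − v₂(t)‖. -/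
open MeasureTheory Real Filter Bornology

section AuxLemmas

open Set

variable {X : Type*} [NormedAddCommGroup X] [NormedSpace ℝ X]

namespace EvolutionDichotomy

lemma aux_unif_bound [CompleteSpace X] (E : EvolutionDichotomy X) (a b : ℝ) :
    ∃ C : ℝ, 0 ≤ C ∧ ∀ s r : ℝ, a ≤ s → s ≤ r → r ≤ b → ‖E.U r s‖ ≤ C := by
  set K : Set (ℝ × ℝ) := (Set.Icc a b ×ˢ Set.Icc a b) ∩ {p : ℝ × ℝ | p.2 ≤ p.1} with hK
  have hKc : IsCompact K :=
    (isCompact_Icc.prod isCompact_Icc).inter_right (isClosed_le continuous_snd continuous_fst)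
  have hpt : ∀ x : X, ∃ C : ℝ, ∀ i : K, ‖E.U (i : ℝ × ℝ).1 (i : ℝ × ℝ).2 x‖ ≤ C := by
    intro x
    obtain ⟨C, hC⟩ := hKc.exists_bound_of_continuousOn
      ((E.U_cont x).mono Set.inter_subset_right)
    exact ⟨C, fun i => hC _ i.2⟩
  obtain ⟨C', hC'⟩ := banach_steinhaus (ι := K)
      (g := fun i : K => E.U (i : ℝ × ℝ).1 (i : ℝ × ℝ).2) hpt
  refine ⟨max C' 0, le_max_right _ _, fun s r hs hsr hrb => ?_⟩
  have hmem : ((r, s) : ℝ × ℝ) ∈ K :=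
    ⟨⟨⟨hs.trans hsr, hrb⟩, ⟨hs, hsr.trans hrb⟩⟩, hsr⟩
  exact le_max_of_le_left (hC' ⟨(r, s), hmem⟩)

lemma keyId (E : EvolutionDichotomy X) {t s s' : ℝ} (h1 : t ≤ s) (h2 : s ≤ s') (x : X) :
    E.V t s (x - E.P s x) = E.V t s' (E.U s' s x - E.P s' (E.U s' s x)) := by
  have hPy : E.P t (E.V t s (x - E.P s x)) = 0 := E.V_mapsTo h1 x
  have hy : E.U s t (E.V t s (x - E.P s x)) = x - E.P s x := E.V_right h1 x
  have h3 := E.V_left (h1.trans h2) (E.V t s (x - E.P s x))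
  rw [hPy, sub_zero] at h3
  have h4 : E.U s' t (E.V t s (x - E.P s x))
      = E.U s' s x - E.P s' (E.U s' s x) := by
    rw [← E.U_comp h1 h2 (E.V t s (x - E.P s x)), hy, map_sub, ← E.comm h2 x]
  rw [← h3, h4]

lemma diffBound (E : EvolutionDichotomy X) {t s s' : ℝ} (h1 : t ≤ s) (h2 : s ≤ s') (w : ℝ → X) :
    ‖E.V t s' (w s' - E.P s' (w s')) - E.V t s (w s - E.P s (w s))‖
      ≤ E.N * ‖w s' - E.U s' s (w s)‖ := by
  rw [E.keyId h1 h2 (w s)]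
  have heq : E.V t s' (w s' - E.P s' (w s'))
      - E.V t s' (E.U s' s (w s) - E.P s' (E.U s' s (w s)))
      = E.V t s' ((w s' - E.U s' s (w s)) - E.P s' (w s' - E.U s' s (w s))) := by
    rw [← map_sub]
    congr 1
    rw [map_sub]
    abel
  rw [heq]
  calc ‖E.V t s' ((w s' - E.U s' s (w s)) - E.P s' (w s' - E.U s' s (w s)))‖
      ≤ E.N * Real.exp (-E.β * (s' - t)) * ‖w s' - E.U s' s (w s)‖ :=
        E.Q_decay (h1.trans h2) _
    _ ≤ E.N * 1 * ‖w s' - E.U s' s (w s)‖ := by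
        have h5 : Real.exp (-E.β * (s' - t)) ≤ 1 := by
          rw [Real.exp_le_one_iff]
          have h6 := mul_nonneg E.β_pos.le (sub_nonneg.mpr (h1.trans h2))
          nlinarith
        exact mul_le_mul_of_nonneg_right
          (mul_le_mul_of_nonneg_left h5 E.N_pos.le) (norm_nonneg _)
    _ = E.N * ‖w s' - E.U s' s (w s)‖ := by ring

lemma contL [CompleteSpace X] (E : EvolutionDichotomy X) (t : ℝ) (w : ℝ → X)
    (hw : Continuous w) :
    ContinuousOn (fun s => E.U t s (w s)) (Set.Iic t) := by
  intro s₀ hs₀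
  obtain ⟨C, hC0, hC⟩ := E.aux_unif_bound (s₀ - 1) t
  have h2 : Tendsto (fun s => E.U t s (w s₀)) (nhdsWithin s₀ (Set.Iic t))
      (nhds (E.U t s₀ (w s₀))) := by
    have hU := (E.U_cont (w s₀)) (t, s₀) hs₀
    have hmap : Tendsto (fun s : ℝ => ((t, s) : ℝ × ℝ)) (nhdsWithin s₀ (Set.Iic t))
        (nhdsWithin (t, s₀) {p : ℝ × ℝ | p.2 ≤ p.1}) := by
      rw [tendsto_nhdsWithin_iff]
      refine ⟨((continuous_const.prodMk continuous_id).tendsto s₀).mono_left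
        nhdsWithin_le_nhds, ?_⟩
      filter_upwards [self_mem_nhdsWithin] with s hs
      exact hs
    exact hU.tendsto.comp hmap
  have h1 : Tendsto (fun s => E.U t s (w s - w s₀)) (nhdsWithin s₀ (Set.Iic t)) (nhds 0) := by
    have hb : ∀ᶠ s in nhdsWithin s₀ (Set.Iic t),
        ‖E.U t s (w s - w s₀)‖ ≤ C * ‖w s - w s₀‖ := by
      have hev : ∀ᶠ s in nhdsWithin s₀ (Set.Iic t), s ∈ Set.Icc (s₀ - 1) (s₀ + 1) :=
        nhdsWithin_le_nhds (Icc_mem_nhds (by linarith) (by linarith))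
      filter_upwards [hev, self_mem_nhdsWithin] with s hs1 hs2
      calc ‖E.U t s (w s - w s₀)‖ ≤ ‖E.U t s‖ * ‖w s - w s₀‖ := (E.U t s).le_opNorm _
        _ ≤ C * ‖w s - w s₀‖ := by
            gcongr
            exact hC s t hs1.1 hs2 le_rfl
    apply squeeze_zero_norm' hb
    have hten : Tendsto (fun s => C * ‖w s - w s₀‖) (nhds s₀) (nhds (C * ‖w s₀ - w s₀‖)) :=
      (continuous_const.mul ((hw.sub continuous_const).norm)).tendsto s₀
    simpa using hten.mono_left nhdsWithin_le_nhds
  have h3 := h1.add h2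
  rw [zero_add] at h3
  exact h3.congr (fun s => by rw [map_sub]; abel)

lemma contR [CompleteSpace X] (E : EvolutionDichotomy X) (t : ℝ) (w : ℝ → X)
    (hw : Continuous w) :
    ContinuousOn (fun s => E.V t s (w s - E.P s (w s))) (Set.Ici t) := by
  intro s₀ hs₀
  obtain ⟨C, hC0, hC⟩ := E.aux_unif_bound (s₀ - 1) (s₀ + 1)
  set l := nhdsWithin s₀ (Set.Ici t) with hl
  have hUc : Tendsto (fun s => E.U (max s s₀) (min s s₀) (w s₀)) l (nhds (w s₀)) := by
    have hmap : Tendsto (fun s : ℝ => ((max s s₀, min s s₀) : ℝ × ℝ)) l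
        (nhdsWithin (s₀, s₀) {p : ℝ × ℝ | p.2 ≤ p.1}) := by
      rw [tendsto_nhdsWithin_iff]
      constructor
      · have hcont : Tendsto (fun s : ℝ => ((max s s₀, min s s₀) : ℝ × ℝ)) (nhds s₀)
            (nhds (max s₀ s₀, min s₀ s₀)) :=
          ((continuous_id.max continuous_const).prodMk
            (continuous_id.min continuous_const)).tendsto s₀
        simpa using hcont.mono_left nhdsWithin_le_nhds
      · exact Filter.Eventually.of_forall
          (fun s => show (min s s₀ : ℝ) ≤ max s s₀ from min_le_max)
    have hU := (E.U_cont (w s₀)) (s₀, s₀)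
      (by simp : ((s₀, s₀) : ℝ × ℝ) ∈ {p : ℝ × ℝ | p.2 ≤ p.1})
    have hcomp := hU.tendsto.comp hmap
    simpa [Function.comp_def, E.U_id] using hcomp
  have hwmax : Tendsto (fun s => w (max s s₀)) l (nhds (w s₀)) := by
    have hcm : Continuous fun s : ℝ => w (max s s₀) :=
      hw.comp (continuous_id.max continuous_const)
    have := hcm.tendsto s₀
    simp only [max_self] at this
    exact this.mono_left nhdsWithin_le_nhds
  have hwmin : Tendsto (fun s => w (min s s₀)) l (nhds (w s₀)) := by
    have hcm : Continuous fun s : ℝ => w (min s s₀) :=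
      hw.comp (continuous_id.min continuous_const)
    have := hcm.tendsto s₀
    simp only [min_self] at this
    exact this.mono_left nhdsWithin_le_nhds
  have harg : Tendsto
      (fun s => w (max s s₀) - E.U (max s s₀) (min s s₀) (w (min s s₀))) l (nhds 0) := by
    apply squeeze_zero_norm' (a := fun s => ‖w (max s s₀) - w s₀‖
      + ‖w s₀ - E.U (max s s₀) (min s s₀) (w s₀)‖ + C * ‖w s₀ - w (min s s₀)‖)
    · have hev : ∀ᶠ s in l, s ∈ Set.Icc (s₀ - 1) (s₀ + 1) :=
        nhdsWithin_le_nhds (Icc_mem_nhds (by linarith) (by linarith))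
      filter_upwards [hev] with s hs
      have hmin1 : s₀ - 1 ≤ min s s₀ := le_min (by linarith [hs.1]) (by linarith)
      have hmax1 : max s s₀ ≤ s₀ + 1 := max_le (by linarith [hs.2]) (by linarith)
      have hb : ‖E.U (max s s₀) (min s s₀)‖ ≤ C := hC _ _ hmin1 min_le_max hmax1
      have hsplit : w (max s s₀) - E.U (max s s₀) (min s s₀) (w (min s s₀))
          = (w (max s s₀) - w s₀) + (w s₀ - E.U (max s s₀) (min s s₀) (w s₀))
            + (E.U (max s s₀) (min s s₀) (w s₀ - w (min s s₀))) := by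
        rw [map_sub]; abel
      rw [hsplit]
      refine (norm_add₃_le).trans ?_
      gcongr
      calc ‖E.U (max s s₀) (min s s₀) (w s₀ - w (min s s₀))‖
          ≤ ‖E.U (max s s₀) (min s s₀)‖ * ‖w s₀ - w (min s s₀)‖ :=
            (E.U (max s s₀) (min s s₀)).le_opNorm _
        _ ≤ C * ‖w s₀ - w (min s s₀)‖ := by gcongr
    · have hconst : Tendsto (fun _ : ℝ => w s₀) l (nhds (w s₀)) := tendsto_const_nhds
      have t1 : Tendsto (fun s => ‖w (max s s₀) - w s₀‖) l (nhds 0) := by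
        have := (hwmax.sub hconst).norm
        simpa using this
      have t2 : Tendsto (fun s => ‖w s₀ - E.U (max s s₀) (min s s₀) (w s₀)‖) l (nhds 0) := by
        have := (hconst.sub hUc).norm
        simpa using this
      have t3 : Tendsto (fun s => C * ‖w s₀ - w (min s s₀)‖) l (nhds 0) := by
        have := ((hconst.sub hwmin).norm).const_mul C
        simpa using this
      have := (t1.add t2).add t3
      simpa using this
  have hkey : ∀ᶠ s in l, ‖E.V t s (w s - E.P s (w s)) - E.V t s₀ (w s₀ - E.P s₀ (w s₀))‖
      ≤ E.N * ‖w (max s s₀) - E.U (max s s₀) (min s s₀) (w (min s s₀))‖ := by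
    filter_upwards [self_mem_nhdsWithin] with s hs
    rcases le_total s s₀ with hcase | hcase
    · rw [norm_sub_rev, max_eq_right hcase, min_eq_left hcase]
      exact E.diffBound hs hcase w
    · rw [max_eq_left hcase, min_eq_right hcase]
      exact E.diffBound hs₀ hcase w
  have hfin : Tendsto (fun s => E.V t s (w s - E.P s (w s))
      - E.V t s₀ (w s₀ - E.P s₀ (w s₀))) l (nhds 0) := by
    apply squeeze_zero_norm' hkey
    have := harg.norm.const_mul E.N
    simpa using this
  exact tendsto_sub_nhds_zero_iff.mp hfin

lemma Gbound (E : EvolutionDichotomy X) (t s : ℝ) (x : X) :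
    ‖E.G t s x‖ ≤ E.N * Real.exp (-E.β * |t - s|) * ‖x‖ := by
  by_cases hst : s < t
  · have hG : E.G t s x = E.P t (E.U t s x) := by
      simp [EvolutionDichotomy.G, if_pos hst]
    rw [hG, E.comm hst.le x, abs_of_nonneg (by linarith : (0:ℝ) ≤ t - s)]
    exact E.P_decay hst.le x
  · push_neg at hst
    have hG : E.G t s x = -(E.V t s (x - E.P s x)) := by
      simp [EvolutionDichotomy.G, not_lt.mpr hst, EvolutionDichotomy.Q, sub_eq_add_neg]
    rw [hG, norm_neg, abs_sub_comm, abs_of_nonneg (by linarith : (0:ℝ) ≤ s - t)]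
    exact E.Q_decay hst x

lemma Gmeas [CompleteSpace X] (E : EvolutionDichotomy X) (t : ℝ) (w : ℝ → X)
    (hw : Continuous w) :
    AEStronglyMeasurable (fun s => E.G t s (w s)) volume := by
  have hLc : ContinuousOn (fun s => E.G t s (w s)) (Set.Iio t) := by
    have h1 : ContinuousOn (fun s => E.P t (E.U t s (w s))) (Set.Iic t) :=
      (E.P t).continuous.comp_continuousOn (E.contL t w hw)
    refine ContinuousOn.congr (h1.mono Set.Iio_subset_Iic_self) ?_
    intro s hs
    simp [EvolutionDichotomy.G, show s < t from hs]
  have hRc : ContinuousOn (fun s => E.G t s (w s)) (Set.Ici t) := by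
    have h1 : ContinuousOn (fun s => -(E.V t s (w s - E.P s (w s)))) (Set.Ici t) :=
      (E.contR t w hw).neg
    refine ContinuousOn.congr h1 ?_
    intro s hs
    simp [EvolutionDichotomy.G, show ¬ s < t from not_lt.mpr hs, EvolutionDichotomy.Q,
      sub_eq_add_neg]
  have h1 : AEStronglyMeasurable (fun s => E.G t s (w s)) (volume.restrict (Set.Iio t)) :=
    hLc.aestronglyMeasurable measurableSet_Iio
  have h2 : AEStronglyMeasurable (fun s => E.G t s (w s)) (volume.restrict (Set.Ici t)) :=
    hRc.aestronglyMeasurable measurableSet_Ici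
  have h3 : AEStronglyMeasurable (fun s => E.G t s (w s))
      (volume.restrict (Set.Iio t ∪ Set.Ici t)) :=
    aestronglyMeasurable_union_iff.mpr ⟨h1, h2⟩
  rwa [Set.Iio_union_Ici, Measure.restrict_univ] at h3

end EvolutionDichotomy

lemma exp_abs_integrable {b : ℝ} (hb : 0 < b) :
    Integrable (fun u : ℝ => Real.exp (-b * |u|)) := by
  have h1 : IntegrableOn (fun u : ℝ => Real.exp (-b * |u|)) (Set.Ioi 0) := by
    refine (exp_neg_integrableOn_Ioi 0 hb).congr_fun ?_ measurableSet_Ioi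
    intro x hx
    show Real.exp (-b * x) = Real.exp (-b * |x|)
    rw [abs_of_pos hx]
  have h1' : IntegrableOn (fun u : ℝ => Real.exp (-b * |u|)) (Set.Ici 0) := by
    rwa [integrableOn_Ici_iff_integrableOn_Ioi]
  have h2 : IntegrableOn (fun u : ℝ => Real.exp (-b * |u|)) (Set.Iic 0) := by
    rw [show (volume : Measure ℝ) = Measure.map (fun x : ℝ => -x) volume from
      (Measure.map_neg_eq_self (volume : Measure ℝ)).symm]
    have m : MeasurableEmbedding fun x : ℝ => -x := (Homeomorph.neg ℝ).measurableEmbedding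
    rw [m.integrableOn_map_iff]
    simpa [Function.comp_def, abs_neg, Set.neg_preimage, Set.neg_Iic, neg_zero] using h1'
  rw [← integrableOn_univ, ← Set.Iic_union_Ioi (a := (0:ℝ))]
  exact h2.union h1

lemma exp_abs_integral {b : ℝ} (hb : 0 < b) :
    (∫ u : ℝ, Real.exp (-b * |u|)) = 2 / b := by
  rw [integral_comp_abs (f := fun x => Real.exp (-b * x))]
  have h := integral_comp_mul_left_Ioi (fun x => Real.exp (-x)) 0 hb
  rw [mul_zero] at h
  simp only [smul_eq_mul, integral_exp_neg_Ioi, neg_zero, Real.exp_zero] at h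
  have h' : (∫ x in Set.Ioi (0:ℝ), Real.exp (-b * x)) = b⁻¹ := by
    simpa [neg_mul] using h
  rw [h']
  field_simp

end AuxLemmas

/-- under the local Lipschitz assumption on `h`, the map
`Φ(v)(t) = ∫_ℝ G(t,s) h(s,v(s)) ds` is Lipschitz on the ball of radius `ρ`:
`sup_t ‖Φ(v₁)(t) − Φ(v₂)(t)‖ ≤ (2L(1+H)N/β) · sup_t ‖v₁(t) − v₂(t)‖`. -/
theorem nonlinear_solution_map_contraction_estimate
    {X : Type*} [NormedAddCommGroup X] [NormedSpace ℝ X] [CompleteSpace X]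
    (E : EvolutionDichotomy X)
    (ρ L : ℝ) (hρ : 0 < ρ) (hL : 0 < L)
    (h : ℝ → X → X)
    (hhL : ∀ t : ℝ, ∀ x₁ x₂ : X, ‖x₁‖ ≤ ρ → ‖x₂‖ ≤ ρ →
      ‖h t x₁ - h t x₂‖ ≤ L * ‖x₁ - x₂‖)
    (hhc : ∀ v : ℝ → X, Continuous v → Bornology.IsBounded (Set.range v) →
      Continuous (fun t : ℝ => h t (v t)))
    (v₁ v₂ : ℝ → X) (hv₁c : Continuous v₁) (hv₂c : Continuous v₂)
    (hv₁ρ : ∀ t : ℝ, ‖v₁ t‖ ≤ ρ) (hv₂ρ : ∀ t : ℝ, ‖v₂ t‖ ≤ ρ) :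
    ∀ t : ℝ, ‖(∫ s : ℝ, E.G t s (h s (v₁ s))) - ∫ s : ℝ, E.G t s (h s (v₂ s))‖ ≤
      (2 * L * (1 + E.H) * E.N / E.β) * ⨆ r : ℝ, ‖v₁ r - v₂ r‖ := by
  intro t
  set M := ⨆ r : ℝ, ‖v₁ r - v₂ r‖ with hM
  have hβ := E.β_pos
  have hN := E.N_pos
  have hH : 0 ≤ E.H := le_trans (norm_nonneg _) (E.P_bound 0)
  have hbdd : BddAbove (Set.range fun r : ℝ => ‖v₁ r - v₂ r‖) := by
    refine ⟨2 * ρ, ?_⟩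
    rintro _ ⟨r, rfl⟩
    calc ‖v₁ r - v₂ r‖ ≤ ‖v₁ r‖ + ‖v₂ r‖ := norm_sub_le _ _
      _ ≤ 2 * ρ := by linarith [hv₁ρ r, hv₂ρ r]
  have hM0 : 0 ≤ M := Real.iSup_nonneg (fun r => norm_nonneg _)
  have hMle : ∀ s : ℝ, ‖v₁ s - v₂ s‖ ≤ M := fun s => le_ciSup hbdd s
  have hw₁ : Continuous (fun s => h s (v₁ s)) := by
    refine hhc v₁ hv₁c (isBounded_iff_forall_norm_le.mpr ⟨ρ, ?_⟩)
    rintro _ ⟨r, rfl⟩; exact hv₁ρ r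
  have hw₂ : Continuous (fun s => h s (v₂ s)) := by
    refine hhc v₂ hv₂c (isBounded_iff_forall_norm_le.mpr ⟨ρ, ?_⟩)
    rintro _ ⟨r, rfl⟩; exact hv₂ρ r
  set f := fun s : ℝ => E.G t s (h s (v₁ s)) with hf
  set g := fun s : ℝ => E.G t s (h s (v₂ s)) with hg
  have hfm : AEStronglyMeasurable f volume := E.Gmeas t _ hw₁
  have hgm : AEStronglyMeasurable g volume := E.Gmeas t _ hw₂
  have hbint : Integrable (fun s : ℝ => E.N * (L * M) * Real.exp (-E.β * |t - s|)) := by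
    have hfun : (fun s : ℝ => Real.exp (-E.β * |t - s|))
        = fun s : ℝ => Real.exp (-E.β * |s - t|) := by
      funext s; rw [abs_sub_comm]
    have hbase : Integrable (fun s : ℝ => Real.exp (-E.β * |t - s|)) := by
      rw [hfun]
      exact (exp_abs_integrable hβ).comp_sub_right t
    exact hbase.const_mul _
  have hptw : ∀ s : ℝ, ‖f s - g s‖ ≤ E.N * (L * M) * Real.exp (-E.β * |t - s|) := by
    intro s
    have hdiff : f s - g s = E.G t s (h s (v₁ s) - h s (v₂ s)) := by rw [map_sub]
    rw [hdiff]
    have hLM : ‖h s (v₁ s) - h s (v₂ s)‖ ≤ L * M :=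
      (hhL s _ _ (hv₁ρ s) (hv₂ρ s)).trans (mul_le_mul_of_nonneg_left (hMle s) hL.le)
    calc ‖E.G t s (h s (v₁ s) - h s (v₂ s))‖
        ≤ E.N * Real.exp (-E.β * |t - s|) * ‖h s (v₁ s) - h s (v₂ s)‖ := E.Gbound t s _
      _ ≤ E.N * Real.exp (-E.β * |t - s|) * (L * M) :=
          mul_le_mul_of_nonneg_left hLM (mul_nonneg hN.le (Real.exp_pos _).le)
      _ = E.N * (L * M) * Real.exp (-E.β * |t - s|) := by ring
  have hd : Integrable (fun s => f s - g s) :=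
    Integrable.mono' hbint (hfm.sub hgm) (Filter.Eventually.of_forall hptw)
  have hintval : (∫ s : ℝ, E.N * (L * M) * Real.exp (-E.β * |t - s|))
      = E.N * (L * M) * (2 / E.β) := by
    rw [integral_const_mul]
    congr 1
    have hcongr : (fun s : ℝ => Real.exp (-E.β * |t - s|))
        = fun s : ℝ => Real.exp (-E.β * |s - t|) := by
      funext s; rw [abs_sub_comm]
    rw [hcongr]
    rw [show (fun s : ℝ => Real.exp (-E.β * |s - t|))
      = fun s : ℝ => (fun u : ℝ => Real.exp (-E.β * |u|)) (s - t) from rfl]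
    rw [integral_sub_right_eq_self (fun u : ℝ => Real.exp (-E.β * |u|)) t]
    exact exp_abs_integral hβ
  have hfinal : E.N * (L * M) * (2 / E.β) ≤ 2 * L * (1 + E.H) * E.N / E.β * M := by
    have hkey : 2 * L * (1 + E.H) * E.N / E.β * M - E.N * (L * M) * (2 / E.β)
        = 2 * L * E.N * M * E.H / E.β := by ring
    have hpos : 0 ≤ 2 * L * E.N * M * E.H / E.β := by positivity
    linarith
  by_cases hfI : Integrable f
  · have hgI : Integrable g :=
      (hfI.sub hd).congr (Filter.Eventually.of_forall fun s => by
        show f s - (f s - g s) = g s; abel)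
    rw [← integral_sub hfI hgI]
    calc ‖∫ s : ℝ, (f s - g s)‖
        ≤ ∫ s : ℝ, E.N * (L * M) * Real.exp (-E.β * |t - s|) :=
          norm_integral_le_of_norm_le hbint (Filter.Eventually.of_forall hptw)
      _ = E.N * (L * M) * (2 / E.β) := hintval
      _ ≤ 2 * L * (1 + E.H) * E.N / E.β * M := hfinal
  · have hgI : ¬ Integrable g := by
      intro hgI
      exact hfI ((hgI.add hd).congr (Filter.Eventually.of_forall fun s => by
        show g s + (f s - g s) = f s; abel))
    rw [integral_undef hfI, integral_undef hgI]
    simp only [sub_zero, norm_zero]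
    positivity
end
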